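/- Let (β_j)_{j≥0} be a sequence of reals with Σ_{j=0}^∞ β_j²·2^j < ∞, and let w be in the closed unit ball of ℝⁿ. Define v_w ∈ ℝ^I to have entry β_j·2^{j/2}·w_{k₁}⋯w_{k_j} at tuple (k₁,…,k_j). Then v_w ∈ ℓ²(I) with ‖v_w‖² = Σ_{j=0}^∞ β_j²·2^j·(‖w‖²)^j ≤ Σ_{j=0}^∞ β_j²·2^j, and for every x in the closed unit ball of ℝⁿ, ⟨v_w, ψ(x)⟩ = Σ_{j=0}^∞ β_j·(⟨w,x⟩)^j. -/

import Mathlib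

/-- The feature map `ψ`: the entry of `ψ(x)` at a tuple `(k₁,…,k_j)` (a list over
`{1,…,n}`) is `2^{-j/2}·x_{k₁}⋯x_{k_j}`. -/
noncomputable def psiFun (n : ℕ) (x : EuclideanSpace ℝ (Fin n)) (l : List (Fin n)) : ℝ :=
  (2 : ℝ) ^ (-(l.length : ℝ) / 2) * (l.map fun k => x k).prod

/-- The vector `v_w` whose entry at a tuple `(k₁,…,k_j)` is `β_j·2^{j/2}·w_{k₁}⋯w_{k_j}`. -/
noncomputable def vwFun (n : ℕ) (β : ℕ → ℝ) (w : EuclideanSpace ℝ (Fin n))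
    (l : List (Fin n)) : ℝ :=
  β l.length * (2 : ℝ) ^ ((l.length : ℝ) / 2) * (l.map fun k => w k).prod

/-! Grouping the tuples by their length `j`, the entries `g j · c_{k₁} ⋯ c_{k_j}` summed over
the tuples of length `j` give `g j · (∑ₖ c_k)^j` by expanding the power, so a sum over `I` of
such an entry is the power series `∑ⱼ g j · (∑ₖ c_k)^j`. Both `v_w²` (with `g j = β_j² 2^j`,
`c = w²`) and `v_w · ψ(x)` (with `g = β`, `c = w x`, the factors `2^{±j/2}` cancelling) are of
this form. Absolute convergence comes from `‖w‖ ≤ 1` in the first case, and in the second from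
Cauchy–Schwarz, `∑ₖ |w_k x_k| ≤ 1`, together with `2|β_j| ≤ β_j² 2^j + 2^{-j}`. -/

open Finset

theorem hasSum_list_length_mul_prod_map {α : Type*} [Fintype α] {g : ℕ → ℝ} {c : α → ℝ}
    (h : Summable fun j => |g j| * (∑ a, |c a|) ^ j) :
    HasSum (fun l : List α => g l.length * (l.map c).prod) (∑' j, g j * (∑ a, c a) ^ j) := by
  rw [← List.equivSigmaTuple.symm.hasSum_iff]
  set F := (fun l : List α => g l.length * (l.map c).prod) ∘ List.equivSigmaTuple.symm
  have hF_apply (j : ℕ) (v : Fin j → α) : F ⟨j, v⟩ = g j * ∏ i, c (v i) := by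
    simp [F, List.prod_ofFn]
  have hF_abs : Summable fun p => |F p| := by
    refine (summable_sigma_of_nonneg fun _ => abs_nonneg _).2 ⟨fun _ => .of_finite, ?_⟩
    simp only [tsum_fintype, hF_apply, abs_mul, Finset.abs_prod, ← Finset.mul_sum]
    simpa only [Fintype.sum_pow] using h
  have hF_fiber (j : ℕ) : HasSum (fun v : Fin j → α => F ⟨j, v⟩) (g j * (∑ a, c a) ^ j) := by
    simpa only [hF_apply, ← Finset.mul_sum, ← Fintype.sum_pow] using
      hasSum_fintype fun v : Fin j → α => F ⟨j, v⟩
  have hF := hF_abs.of_abs.hasSum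
  rwa [← (hF.sigma hF_fiber).tsum_eq] at hF

theorem summable_abs_of_summable_sq_mul_two_pow {β : ℕ → ℝ}
    (hβ : Summable fun j => β j ^ 2 * 2 ^ j) : Summable fun j => |β j| := by
  refine .of_nonneg_of_le (fun _ => abs_nonneg _) (fun j => ?_)
    ((hβ.add summable_geometric_two).div_const 2)
  have h_gap : β j ^ 2 * 2 ^ j + (1 / 2) ^ j - 2 * |β j| = (|β j| * 2 ^ j - 1) ^ 2 / 2 ^ j := by
    rw [div_pow, one_pow, ← sq_abs (β j)]
    field_simp
    ring
  linarith [show 0 ≤ (|β j| * 2 ^ j - 1) ^ 2 / 2 ^ j by positivity]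

theorem EuclideanSpace.sum_abs_mul_le_norm_mul_norm {ι : Type*} [Fintype ι]
    (w x : EuclideanSpace ℝ ι) : ∑ k, |w k * x k| ≤ ‖w‖ * ‖x‖ := by
  simpa only [abs_mul, sq_abs, ← EuclideanSpace.real_norm_sq_eq,
    Real.sqrt_sq (norm_nonneg _)] using
    Real.sum_mul_le_sqrt_mul_sqrt univ (fun k => |w k|) (fun k => |x k|)

theorem vwFun_sq (n : ℕ) (β : ℕ → ℝ) (w : EuclideanSpace ℝ (Fin n)) (l : List (Fin n)) :
    vwFun n β w l ^ 2 = β l.length ^ 2 * 2 ^ l.length * (l.map fun k => w k ^ 2).prod := by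
  have h2 : ((2 : ℝ) ^ ((l.length : ℝ) / 2)) ^ 2 = 2 ^ l.length := by
    rw [← Real.rpow_mul_natCast zero_le_two]; norm_num
  rw [vwFun, mul_pow, mul_pow, h2, sq (List.prod _), ← List.prod_map_mul]
  simp only [sq]

theorem vwFun_mul_psiFun (n : ℕ) (β : ℕ → ℝ) (w x : EuclideanSpace ℝ (Fin n))
    (l : List (Fin n)) :
    vwFun n β w l * psiFun n x l = β l.length * (l.map fun k => w k * x k).prod := by
  have h2 : (2 : ℝ) ^ ((l.length : ℝ) / 2) * 2 ^ (-(l.length : ℝ) / 2) = 1 := by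
    rw [← Real.rpow_add two_pos]; ring_nf; exact Real.rpow_zero 2
  rw [vwFun, psiFun, List.prod_map_mul]
  linear_combination (β l.length * (l.map fun k => w k).prod * (l.map fun k => x k).prod) * h2

/-- for coefficients with `Σ_j β_j²·2^j < ∞` and `w` in the unit ball,
`v_w ∈ ℓ²(I)` with `‖v_w‖² = Σ_j β_j²·2^j·(‖w‖²)^j ≤ Σ_j β_j²·2^j`, and
`⟨v_w, ψ(x)⟩ = Σ_j β_j·⟨w,x⟩^j` for all `x` in the unit ball. -/
theorem vw_in_l2_and_inner
    (n : ℕ) (β : ℕ → ℝ) (hβ : Summable fun j => β j ^ 2 * 2 ^ j)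
    (w : EuclideanSpace ℝ (Fin n)) (hw : ‖w‖ ≤ 1) :
    Memℓp (vwFun n β w) 2 ∧
      (∑' l, (vwFun n β w l) ^ 2) = (∑' j : ℕ, β j ^ 2 * 2 ^ j * (‖w‖ ^ 2) ^ j) ∧
      (∑' l, (vwFun n β w l) ^ 2) ≤ (∑' j : ℕ, β j ^ 2 * 2 ^ j) ∧
      ∀ x : EuclideanSpace ℝ (Fin n), ‖x‖ ≤ 1 →
        (∑' l, vwFun n β w l * psiFun n x l) = ∑' j : ℕ, β j * (inner ℝ w x : ℝ) ^ j := by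
  have hw_pow_le (j : ℕ) : (‖w‖ ^ 2) ^ j ≤ 1 :=
    pow_le_one₀ (by positivity) (pow_le_one₀ (norm_nonneg w) hw)
  have hβw : Summable fun j => β j ^ 2 * 2 ^ j * (‖w‖ ^ 2) ^ j :=
    hβ.of_nonneg_of_le (fun _ => by positivity)
      fun j => mul_le_of_le_one_right (by positivity) (hw_pow_le j)
  have hsq : HasSum (fun l => vwFun n β w l ^ 2) (∑' j, β j ^ 2 * 2 ^ j * (‖w‖ ^ 2) ^ j) := by
    simp only [vwFun_sq, EuclideanSpace.real_norm_sq_eq]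
    refine hasSum_list_length_mul_prod_map (c := fun k => w k ^ 2) ?_
    simpa only [abs_pow, sq_abs, abs_mul, abs_two, ← EuclideanSpace.real_norm_sq_eq] using hβw
  refine ⟨memℓp_gen ?_, hsq.tsum_eq, ?_, fun x hx => ?_⟩
  · simpa [Real.norm_eq_abs] using hsq.summable
  · rw [hsq.tsum_eq]
    exact hβw.tsum_le_tsum (fun j => mul_le_of_le_one_right (by positivity) (hw_pow_le j)) hβ
  · have hwx : ∑ k, |w k * x k| ≤ 1 :=
      (EuclideanSpace.sum_abs_mul_le_norm_mul_norm w x).trans (mul_le_one₀ hw (norm_nonneg x) hx)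
    have hinner : inner ℝ w x = ∑ k, w k * x k := by simp [PiLp.inner_apply, mul_comm]
    simp only [vwFun_mul_psiFun, hinner]
    refine (hasSum_list_length_mul_prod_map ?_).tsum_eq
    exact (summable_abs_of_summable_sq_mul_two_pow hβ).of_nonneg_of_le (fun _ => by positivity)
      fun j => mul_le_of_le_one_right (abs_nonneg _) (pow_le_one₀ (by positivity) hwx)
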